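/- For every n ≥ 5, every smallest string attractor of the Fibonacci word F_n consists of exactly two positions, one lying in the interval [f_{n-2}, f_{n-1} − 1] and the other in the interval [f_{n-1}, f_n − 1] (1-based positions). -/

import Mathlib

/-- Fibonacci numbers: f 0 = f 1 = 1, f (n+2) = f (n+1) + f n. -/
def fib : ℕ → ℕ
  | 0 => 1
  | 1 => 1
  | n + 2 => fib (n + 1) + fib n

/-- Fibonacci words over {a, b}; `false` encodes `a`, `true` encodes `b`. -/
def F : ℕ → List Bool
  | 0 => [true]
  | 1 => [false]
  | n + 2 => F (n + 1) ++ F n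

/-- Singular words: S 0 = a, S 1 = b, S 2 = S 0 · S₋₁ · S 0 = aa,
and S n = S (n-2) · S (n-3) · S (n-2) for n ≥ 3. -/
def S : ℕ → List Bool
  | 0 => [false]
  | 1 => [true]
  | 2 => [false, false]
  | n + 3 => S (n + 1) ++ S n ++ S (n + 1)

/-- `w` occurs in `T` at (1-based) position `i`, i.e. `w = T[i .. i + |w| - 1]`. -/
def OccursAt {α : Type*} (T w : List α) (i : ℕ) : Prop :=
  1 ≤ i ∧ i + w.length ≤ T.length + 1 ∧ (T.drop (i - 1)).take w.length = w

/-- `Γ` is a string attractor of `T`: a set of (1-based) positions of `T` such that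
every nonempty substring of `T` has an occurrence crossing a position of `Γ`. -/
def IsAttractor {α : Type*} (T : List α) (Γ : Finset ℕ) : Prop :=
  (∀ k ∈ Γ, 1 ≤ k ∧ k ≤ T.length) ∧
  ∀ w : List α, w ≠ [] → w <:+: T →
    ∃ i, OccursAt T w i ∧ ∃ k ∈ Γ, i ≤ k ∧ k < i + w.length

/-- `Γ` is a smallest string attractor of `T`. -/
def IsSmallestAttractor {α : Type*} (T : List α) (Γ : Finset ℕ) : Prop :=
  IsAttractor T Γ ∧ ∀ Γ' : Finset ℕ, IsAttractor T Γ' → Γ.card ≤ Γ'.card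

/-- The set of all smallest string attractors of `T`. -/
def Att {α : Type*} (T : List α) : Set (Finset ℕ) := {Γ | IsSmallestAttractor T Γ}

lemma fib_pos : ∀ n, 1 ≤ fib n
  | 0 => le_refl 1
  | 1 => le_refl 1
  | n + 2 => by rw [fib]; have := fib_pos n; omega

lemma F_length : ∀ n, (F n).length = fib n
  | 0 => rfl
  | 1 => rfl
  | n + 2 => by
    rw [F, fib, List.length_append, F_length (n+1), F_length n]

lemma S_length : ∀ n, (S n).length = fib n
  | 0 => rfl
  | 1 => rfl
  | 2 => rfl
  | n + 3 => by
    have h3 : fib (n+3) = fib (n+2) + fib (n+1) := rfl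
    have h2 : fib (n+2) = fib (n+1) + fib n := rfl
    rw [S, List.length_append, List.length_append, S_length (n+1), S_length n]
    omega

lemma S_ne_nil (n : ℕ) : S n ≠ [] := by
  intro h
  have h1 := S_length n
  rw [h] at h1
  have h2 := fib_pos n
  simp at h1
  omega

lemma F_succ (n : ℕ) : F (n + 2) = F (n + 1) ++ F n := rfl

lemma F_prefix (n : ℕ) : F (n + 1) <+: F (n + 2) := ⟨F n, rfl⟩

lemma count_F : ∀ n, (F (n + 1)).count false = fib n
  | 0 => rfl
  | 1 => rfl
  | n + 2 => by
    rw [show F (n+3) = F (n+2) ++ F (n+1) from rfl, List.count_append,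
        count_F (n+1), count_F n]
    rfl

lemma F_even_last : ∀ n, ∃ D, F (2*n+2) = D ++ [true]
  | 0 => ⟨[false], rfl⟩
  | n + 1 => by
    obtain ⟨D, hD⟩ := F_even_last n
    exact ⟨F (2*n+3) ++ D, by
      rw [show 2*(n+1)+2 = (2*n+2)+2 by ring, F_succ, show (2*n+2)+1 = 2*n+3 by ring, hD,
          List.append_assoc]⟩

lemma F_odd_last : ∀ n, ∃ D, F (2*n+3) = D ++ [false]
  | 0 => ⟨[false, true], rfl⟩
  | n + 1 => by
    obtain ⟨D, hD⟩ := F_odd_last n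
    exact ⟨F (2*n+4) ++ D, by
      rw [show 2*(n+1)+3 = (2*n+3)+2 by ring, F_succ, show (2*n+3)+1 = 2*n+4 by ring, hD,
          List.append_assoc]⟩

/-- the extra first character of the singular word `S k` -/
def sc (k : ℕ) : Bool := decide (k % 2 = 1)

/-- split of `F k` into its last character and the rest: the last character of `F k`
is `true` iff `k` is even (k ≥ 2). -/
lemma F_split (k : ℕ) (hk : 2 ≤ k) : F k = (F k).dropLast ++ [sc (k+1)] := by
  rcases Nat.even_or_odd k with ⟨m, hm⟩ | ⟨m, hm⟩
  · obtain ⟨D, hD⟩ := F_even_last (m - 1)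
    have hkk : 2 * (m - 1) + 2 = k := by omega
    rw [hkk] at hD
    have hsc : sc (k + 1) = true := by unfold sc; simp; omega
    rw [hsc, hD, List.dropLast_concat]
  · obtain ⟨D, hD⟩ := F_odd_last (m - 1)
    have hkk : 2 * (m - 1) + 3 = k := by omega
    rw [hkk] at hD
    have hsc : sc (k + 1) = false := by unfold sc; simp; omega
    rw [hsc, hD, List.dropLast_concat]

lemma sc_two (k : ℕ) : sc (k + 2) = sc k := by
  unfold sc
  have : (k + 2) % 2 = k % 2 := Nat.add_mod_right k 2
  rw [this]

lemma S_eq : ∀ k, 2 ≤ k → S k = sc k :: (F k).dropLast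
  | 2, _ => by decide
  | 3, _ => by decide
  | 4, _ => by decide
  | (k + 5), _ => by
    have e3 := S_eq (k+3) (by omega)
    have e2 := S_eq (k+2) (by omega)
    set D3 := (F (k+3)).dropLast with hD3
    set D2 := (F (k+2)).dropLast with hD2
    set D4 := (F (k+4)).dropLast with hD4
    have hd3 : F (k+3) = D3 ++ [sc (k+4)] := F_split _ (by omega)
    have hd2 : F (k+2) = D2 ++ [sc (k+3)] := F_split _ (by omega)
    have hd4 : F (k+4) = D4 ++ [sc (k+5)] := F_split _ (by omega)
    have h45 : (F (k+5)).dropLast = F (k+4) ++ D3 := by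
      have h : F (k+5) = (F (k+4) ++ D3) ++ [sc (k+4)] := by
        rw [F_succ (k+3)]
        conv_lhs => rw [hd3]
        rw [List.append_assoc]
      rw [h, List.dropLast_concat]
    have h44 : D4 = F (k+3) ++ D2 := by
      have h : F (k+4) = (F (k+3) ++ D2) ++ [sc (k+3)] := by
        rw [F_succ (k+2)]
        conv_lhs => rw [hd2]
        rw [List.append_assoc]
      rw [hD4, h, List.dropLast_concat]
    have scA : sc (k+5) = sc (k+3) := sc_two (k+3)
    have scB : sc (k+4) = sc (k+2) := sc_two (k+2)
    show S (k+3) ++ S (k+2) ++ S (k+3) = sc (k+5) :: (F (k+5)).dropLast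
    rw [h45, hd4, h44, hd3, e3, e2, scA, scB]
    simp [List.append_assoc]

lemma S_even_ends : ∀ n, 1 ≤ n → ∃ E, S (2*n) = E ++ [false]
  | 1, _ => ⟨[false], rfl⟩
  | (n + 2), _ => by
    obtain ⟨E, hE⟩ := S_even_ends (n+1) (by omega)
    refine ⟨S (2*n+2) ++ S (2*n+1) ++ E, ?_⟩
    have h : S (2*(n+2)) = S (2*n+2) ++ S (2*n+1) ++ S (2*n+2) := by
      rw [show 2*(n+2) = (2*n+1)+3 by ring]
      rw [S]
    rw [h, show 2*(n+1) = 2*n+2 by ring] at *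
    rw [hE]
    simp [List.append_assoc]

/-- The Fibonacci morphism: a ↦ ab, b ↦ a. -/
def phi (w : List Bool) : List Bool := w.flatMap (fun c => if c then [false] else [false, true])

lemma phi_nil : phi [] = [] := rfl

lemma phi_cons (c : Bool) (w : List Bool) :
    phi (c :: w) = (if c then [false] else [false, true]) ++ phi w := rfl

lemma phi_append (u v : List Bool) : phi (u ++ v) = phi u ++ phi v := by
  simp [phi]

lemma phi_length (u : List Bool) : (phi u).length = u.length + u.count false := by
  induction u with
  | nil => rfl
  | cons c w ih =>
    rw [phi_cons, List.length_append, ih]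
    cases c <;> (simp [List.count_cons]; try omega)

lemma phi_head (u : List Bool) (hu : u ≠ []) : ∃ t, phi u = false :: t := by
  cases u with
  | nil => exact absurd rfl hu
  | cons c w => cases c <;> exact ⟨_, rfl⟩

lemma phi_F : ∀ n, phi (F (n + 1)) = F (n + 2)
  | 0 => rfl
  | 1 => rfl
  | n + 2 => by
    rw [F_succ (n+1), phi_append, phi_F (n+1), phi_F n, F_succ (n+2)]

lemma sc_of_even (k : ℕ) (h : k % 2 = 0) : sc k = false := by unfold sc; simp; omega
lemma sc_of_odd (k : ℕ) (h : k % 2 = 1) : sc k = true := by unfold sc; simp [h]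

lemma phi_S_even (k : ℕ) (hk : 2 ≤ k) (hpar : k % 2 = 0) :
    phi (S k) = false :: S (k + 1) := by
  obtain ⟨m, rfl⟩ : ∃ m, k = m + 1 := ⟨k - 1, by omega⟩
  have e1 := S_eq (m+1) hk
  have e2 := S_eq (m+2) (by omega)
  have f1 : F (m+1) = (F (m+1)).dropLast ++ [sc (m+2)] := F_split _ hk
  have f2 : F (m+2) = (F (m+2)).dropLast ++ [sc (m+3)] := F_split _ (by omega)
  have hsck : sc (m+1) = false := sc_of_even _ hpar
  have hsck1 : sc (m+2) = true := sc_of_odd _ (by omega)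
  have hsck2 : sc (m+3) = false := sc_of_even _ (by omega)
  have hphiD : phi (F (m+1)).dropLast = (F (m+2)).dropLast := by
    have h := phi_F m
    conv_lhs at h => rw [f1]
    conv_rhs at h => rw [f2]
    rw [phi_append, hsck1, hsck2] at h
    have h2 : phi [true] = [false] := rfl
    rw [h2] at h
    exact List.append_cancel_right h
  rw [e1, e2, hsck, hsck1, phi_cons, hphiD]
  rfl

lemma phi_S_odd (k : ℕ) (hk : 2 ≤ k) (hpar : k % 2 = 1) :
    S (k + 1) = phi (S k) ++ [false] := by
  obtain ⟨m, rfl⟩ : ∃ m, k = m + 1 := ⟨k - 1, by omega⟩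
  have e1 := S_eq (m+1) hk
  have e2 := S_eq (m+2) (by omega)
  have f1 : F (m+1) = (F (m+1)).dropLast ++ [sc (m+2)] := F_split _ hk
  have f2 : F (m+2) = (F (m+2)).dropLast ++ [sc (m+3)] := F_split _ (by omega)
  have hsck : sc (m+1) = true := sc_of_odd _ hpar
  have hsck1 : sc (m+2) = false := sc_of_even _ (by omega)
  have hsck2 : sc (m+3) = true := sc_of_odd _ (by omega)
  have hphiD : phi (F (m+1)).dropLast ++ [false] = (F (m+2)).dropLast := by
    have h := phi_F m
    conv_lhs at h => rw [f1]
    conv_rhs at h => rw [f2]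
    rw [phi_append, hsck1, hsck2] at h
    have h2 : phi [false] = [false, true] := rfl
    rw [h2] at h
    have h3 : (phi (F (m+1)).dropLast ++ [false]) ++ [true] = (F (m+2)).dropLast ++ [true] := by
      rw [List.append_assoc]; exact h
    exact List.append_cancel_right h3
  rw [e1, e2, hsck, hsck1, phi_cons, ← hphiD]
  rfl

lemma phi_false_head : ∀ (u t : List Bool), ∃ r, phi u ++ false :: t = false :: r
  | [], t => ⟨t, rfl⟩
  | true :: u', t => ⟨phi u' ++ false :: t, rfl⟩
  | false :: u', t => ⟨true :: (phi u' ++ false :: t), rfl⟩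

lemma phi_cons_false (u : List Bool) : phi (false :: u) = false :: true :: phi u := rfl
lemma phi_cons_true (u : List Bool) : phi (true :: u) = false :: phi u := rfl

lemma not_prefix_phi_true (w : List Bool) (x : List Bool) : ¬ (true :: x <+: phi w) := by
  intro h
  cases w with
  | nil => rw [show phi [] = [] from rfl, List.prefix_nil] at h; exact List.cons_ne_nil _ _ h
  | cons d w' =>
    obtain ⟨t, ht⟩ := phi_head (d :: w') (by simp)
    rw [ht, List.cons_prefix_cons] at h
    simp at h

lemma desub1 : ∀ (u w : List Bool), phi u ++ [false] <+: phi w → u <+: w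
  | [], w, _ => List.nil_prefix
  | c :: u', [], h => by
    rw [show phi [] = [] from rfl, List.prefix_nil] at h
    cases c <;> simp [phi_cons_false, phi_cons_true] at h
  | c :: u', d :: w', h => by
    cases c <;> cases d <;>
      simp only [phi_cons_false, phi_cons_true, List.cons_append, List.cons_prefix_cons,
        true_and] at h
    · -- c = false, d = false
      exact List.cons_prefix_cons.mpr ⟨rfl, desub1 u' w' h⟩
    · -- c = false, d = true
      exact absurd h (not_prefix_phi_true w' _)
    · -- c = true, d = false
      exfalso
      obtain ⟨r, hr⟩ := phi_false_head u' []
      rw [show (phi u' ++ [false]) = phi u' ++ false :: [] from rfl, hr,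
        List.cons_prefix_cons] at h
      simp at h
    · -- c = true, d = true
      exact List.cons_prefix_cons.mpr ⟨rfl, desub1 u' w' h⟩

lemma desub2 : ∀ (u w : List Bool), phi u ++ [false, true] <+: phi w → u ++ [false] <+: w
  | [], [], h => by
    rw [show phi [] = [] from rfl, List.prefix_nil] at h; exact absurd h (by simp)
  | [], d :: w', h => by
    cases d
    · exact List.cons_prefix_cons.mpr ⟨rfl, List.nil_prefix⟩
    · exfalso
      rw [show phi [] ++ [false, true] = false :: [true] from rfl, phi_cons_true,
        List.cons_prefix_cons] at h
      exact not_prefix_phi_true w' [] h.2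
  | c :: u', [], h => by
    rw [show phi [] = [] from rfl, List.prefix_nil] at h
    cases c <;> simp [phi_cons_false, phi_cons_true] at h
  | c :: u', d :: w', h => by
    cases c <;> cases d <;>
      simp only [phi_cons_false, phi_cons_true, List.cons_append, List.cons_prefix_cons,
        true_and] at h
    · -- c = false, d = false
      exact List.cons_prefix_cons.mpr ⟨rfl, desub2 u' w' h⟩
    · -- c = false, d = true
      exact absurd h (not_prefix_phi_true w' _)
    · -- c = true, d = false
      exfalso
      obtain ⟨r, hr⟩ := phi_false_head u' [true]
      rw [show (phi u' ++ [false, true]) = phi u' ++ false :: [true] from rfl, hr,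
        List.cons_prefix_cons] at h
      simp at h
    · -- c = true, d = true
      exact List.cons_prefix_cons.mpr ⟨rfl, desub2 u' w' h⟩

lemma block_start : ∀ (w : List Bool) (m : ℕ), (phi w)[m]? = some false →
    ∃ j, j < w.length ∧ m = (phi (w.take j)).length
  | [], m, h => by simp [phi] at h
  | true :: w', 0, _ => ⟨0, by simp, rfl⟩
  | false :: w', 0, _ => ⟨0, by simp, rfl⟩
  | true :: w', (m+1), h => by
    rw [phi_cons_true, List.getElem?_cons_succ] at h
    obtain ⟨j, hj, hm⟩ := block_start w' m h
    refine ⟨j+1, by simpa using hj, ?_⟩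
    rw [List.take_succ_cons, phi_cons_true]
    simp [hm]
  | false :: w', 1, h => by rw [phi_cons_false] at h; simp at h
  | false :: w', (m+2), h => by
    rw [phi_cons_false, List.getElem?_cons_succ, List.getElem?_cons_succ] at h
    obtain ⟨j, hj, hm⟩ := block_start w' m h
    refine ⟨j+1, by simpa using hj, ?_⟩
    rw [List.take_succ_cons, phi_cons_false]
    simp [hm]

lemma block_true : ∀ (w : List Bool) (m : ℕ), (phi w)[m]? = some true →
    1 ≤ m ∧ (phi w)[m-1]? = some false
  | [], m, h => by simp [phi] at h
  | true :: w', 0, h => by rw [phi_cons_true] at h; simp at h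
  | false :: w', 0, h => by rw [phi_cons_false] at h; simp at h
  | false :: w', 1, _ => ⟨le_refl 1, by rw [phi_cons_false]; rfl⟩
  | true :: w', (m+1), h => by
    rw [phi_cons_true, List.getElem?_cons_succ] at h
    obtain ⟨h1, h2⟩ := block_true w' m h
    obtain ⟨m', rfl⟩ : ∃ m', m = m' + 1 := ⟨m-1, by omega⟩
    refine ⟨by omega, ?_⟩
    rw [phi_cons_true, show m' + 1 + 1 - 1 = m' + 1 by omega, List.getElem?_cons_succ]
    simpa using h2
  | false :: w', (m+2), h => by
    rw [phi_cons_false, List.getElem?_cons_succ, List.getElem?_cons_succ] at h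
    obtain ⟨h1, h2⟩ := block_true w' m h
    obtain ⟨m', rfl⟩ : ∃ m', m = m' + 1 := ⟨m-1, by omega⟩
    refine ⟨by omega, ?_⟩
    rw [phi_cons_false, show m' + 1 + 2 - 1 = m' + 1 + 1 by omega,
      List.getElem?_cons_succ, List.getElem?_cons_succ]
    simpa using h2

section OccLemmas
variable {α : Type*}

lemma take_drop_eq_of_take_eq {A B : List α} {m l j : ℕ} (h : A.take m = B.take m)
    (hlm : j + l ≤ m) : (A.drop j).take l = (B.drop j).take l := by
  calc (A.drop j).take l = ((A.drop j).take (m - j)).take l := by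
        rw [List.take_take, min_eq_left (by omega)]
    _ = ((A.take m).drop j).take l := by rw [List.drop_take]
    _ = ((B.take m).drop j).take l := by rw [h]
    _ = ((B.drop j).take (m - j)).take l := by rw [List.drop_take]
    _ = (B.drop j).take l := by rw [List.take_take, min_eq_left (by omega)]

lemma occ_shift {A B w : List α} {i m : ℕ} (h : A.take m = B.take m)
    (hB : OccursAt B w i) (hend : i - 1 + w.length ≤ m) (hm : m ≤ A.length) :
    OccursAt A w i := by
  obtain ⟨h1, h2, h3⟩ := hB
  exact ⟨h1, by omega, by rw [take_drop_eq_of_take_eq h (by omega)]; exact h3⟩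

lemma occ_prefix_ext {A B w : List α} {i : ℕ} (h : A <+: B) (hA : OccursAt A w i) :
    OccursAt B w i := by
  obtain ⟨t, rfl⟩ := h
  obtain ⟨h1, h2, h3⟩ := hA
  have ht : (A ++ t).take A.length = A.take A.length := by
    rw [List.take_left, List.take_length]
  exact occ_shift ht ⟨h1, h2, h3⟩ (by omega) (by rw [List.length_append]; omega)

lemma occ_restrict {A B w : List α} {i : ℕ} (h : A <+: B) (hB : OccursAt B w i)
    (hend : i - 1 + w.length ≤ A.length) : OccursAt A w i := by
  obtain ⟨t, rfl⟩ := h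
  have ht : A.take A.length = (A ++ t).take A.length := by
    rw [List.take_left, List.take_length]
  exact occ_shift ht hB hend le_rfl

lemma occ_append_right {B w : List α} {i : ℕ} (A : List α) (hB : OccursAt B w i) :
    OccursAt (A ++ B) w (i + A.length) := by
  obtain ⟨h1, h2, h3⟩ := hB
  refine ⟨by omega, by rw [List.length_append]; omega, ?_⟩
  rw [show i + A.length - 1 = A.length + (i - 1) by omega, List.drop_length_add_append]
  exact h3

lemma occ_append_right_inv {A B w : List α} {i : ℕ} (h : OccursAt (A ++ B) w i)
    (hi : A.length < i) : OccursAt B w (i - A.length) := by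
  obtain ⟨h1, h2, h3⟩ := h
  rw [List.length_append] at h2
  refine ⟨by omega, by omega, ?_⟩
  rw [show i - 1 = A.length + (i - A.length - 1) by omega, List.drop_length_add_append] at h3
  exact h3

lemma occ_of_infix {T w : List α} (h : w <:+: T) : ∃ i, OccursAt T w i := by
  obtain ⟨s, t, rfl⟩ := h
  refine ⟨s.length + 1, by omega, ?_, ?_⟩
  · simp only [List.length_append]; omega
  · rw [List.append_assoc, Nat.add_sub_cancel, List.drop_left, List.take_left]

lemma infix_of_occ {T w : List α} {i : ℕ} (h : OccursAt T w i) : w <:+: T := by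
  obtain ⟨h1, h2, h3⟩ := h
  rw [← h3]
  exact ((List.take_prefix _ _).isInfix).trans ((List.drop_suffix _ _).isInfix)

lemma occ_head {T v : List α} {c : α} {i : ℕ} (h : OccursAt T (c :: v) i) :
    T[i-1]? = some c := by
  obtain ⟨h1, h2, h3⟩ := h
  have hd : T.drop (i-1) = c :: (v ++ (T.drop (i-1)).drop (c :: v).length) := by
    conv_lhs => rw [← List.take_append_drop (c :: v).length (T.drop (i-1))]
    rw [h3, List.cons_append]
  have : T[i-1]? = (T.drop (i-1))[0]? := by
    rw [List.getElem?_drop, Nat.add_zero]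
  rw [this, hd]
  simp

lemma occ_cons {T v : List α} {c : α} {i : ℕ} (hc : T[i-2]? = some c)
    (h : OccursAt T v i) (hi : 2 ≤ i) : OccursAt T (c :: v) (i - 1) := by
  obtain ⟨h1, h2, h3⟩ := h
  obtain ⟨hlt, hget⟩ := List.getElem?_eq_some_iff.mp hc
  refine ⟨by omega, by simp only [List.length_cons]; omega, ?_⟩
  have hd : T.drop (i-1-1) = c :: T.drop (i-1) := by
    rw [show i - 1 - 1 = i - 2 by omega, List.drop_eq_getElem_cons hlt, hget,
      show i - 2 + 1 = i - 1 by omega]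
  rw [hd, List.length_cons, List.take_succ_cons, h3]

lemma occ_of_prefix_drop {w u : List α} {j : ℕ} (h : u <+: w.drop j) (hj : j ≤ w.length) :
    OccursAt w u (j + 1) := by
  obtain ⟨t, ht⟩ := h
  refine ⟨by omega, ?_, ?_⟩
  · have : u.length + t.length = w.length - j := by
      have := congrArg List.length ht
      simp only [List.length_append, List.length_drop] at this
      omega
    omega
  · rw [Nat.add_sub_cancel, ← ht, List.take_left]

lemma occ_to_prefix {T w : List α} {i : ℕ} (h : OccursAt T w i) : w <+: T.drop (i-1) :=
  h.2.2 ▸ List.take_prefix _ _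

end OccLemmas

lemma take_of_prefix {α : Type*} {A B : List α} (h : A <+: B) {m : ℕ} (hm : m ≤ A.length) :
    B.take m = A.take m := by
  obtain ⟨t, rfl⟩ := h
  rw [List.take_append_of_le_length hm]

lemma F_prefix_two (n : ℕ) : F (n + 1) <+: F (n + 3) :=
  (F_prefix n).trans (F_prefix (n+1))

/-- length of the image under phi of the prefix of `F (k+3)` of length `fib (k+1) - 1`. -/
lemma phi_take_len (k : ℕ) (hk : 2 ≤ k) :
    (phi ((F (k+3)).take (fib (k+1) - 1))).length
      = fib (k+1) - 1 + ((F (k+1)).dropLast).count false := by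
  have hpre : F (k+1) <+: F (k+3) := F_prefix_two k
  have hlen : (F (k+1)).length = fib (k+1) := F_length (k+1)
  have ht : (F (k+3)).take (fib (k+1) - 1) = (F (k+1)).dropLast := by
    rw [take_of_prefix hpre (by omega), List.dropLast_eq_take, hlen]
  rw [ht, phi_length, List.length_dropLast, hlen]

lemma count_dropLast_even (k : ℕ) (hk : 2 ≤ k) (hpar : k % 2 = 0) :
    ((F (k+1)).dropLast).count false = fib k - 1 := by
  have f1 : F (k+1) = (F (k+1)).dropLast ++ [sc (k+2)] := F_split _ (by omega)
  have hsc : sc (k+2) = false := by rw [sc_two]; exact sc_of_even _ hpar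
  have hcount : (F (k+1)).count false = fib k := count_F k
  rw [f1, hsc, List.count_append] at hcount
  simp at hcount
  omega

lemma count_dropLast_odd (k : ℕ) (hk : 2 ≤ k) (hpar : k % 2 = 1) :
    ((F (k+1)).dropLast).count false = fib k := by
  have f1 : F (k+1) = (F (k+1)).dropLast ++ [sc (k+2)] := F_split _ (by omega)
  have hsc : sc (k+2) = true := by rw [sc_two]; exact sc_of_odd _ hpar
  have hcount : (F (k+1)).count false = fib k := count_F k
  rw [f1, hsc, List.count_append] at hcount
  simp at hcount
  omega

lemma drop_phi (w : List Bool) (j m : ℕ) (hm : m = (phi (w.take j)).length) :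
    (phi w).drop m = phi (w.drop j) := by
  conv_lhs => rw [← List.take_append_drop j w]
  rw [phi_append, hm, List.drop_left]

lemma master : ∀ k, 2 ≤ k → ∀ i, OccursAt (F (k+3)) (S k) i → i = fib (k+1) := by
  intro k hk
  induction k, hk using Nat.le_induction with
  | base =>
    intro i h
    obtain ⟨h1, h2, h3⟩ := h
    have hl : (F 5).length = 8 := by decide
    have hs : (S 2).length = 2 := rfl
    rw [hl, hs] at h2
    have h2' : i ≤ 7 := by omega
    interval_cases i <;> first | rfl | (revert h3; decide)
  | succ k hk IH =>
    intro i hocc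
    have hFphi : F (k+4) = phi (F (k+3)) := (phi_F (k+2)).symm
    have hSeq := S_eq (k+1) (by omega)
    have hflen : (F (k+3)).length = fib (k+3) := F_length _
    rcases Nat.even_or_odd k with he | ho
    · -- k even : S (k+1) starts with `true`
      have hpar : k % 2 = 0 := Nat.even_iff.mp he
      have hsc : sc (k+1) = true := sc_of_odd _ (by omega)
      have hSk1 : phi (S k) = false :: S (k+1) := phi_S_even k hk hpar
      have hocc' : OccursAt (F (k+4)) (true :: (F (k+1)).dropLast) i := by
        rw [hSeq, hsc] at hocc; exact hocc
      have ht : (F (k+4))[i-1]? = some true := occ_head hocc'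
      rw [hFphi] at ht
      obtain ⟨hi2, hm0⟩ := block_true _ _ ht
      have hi2' : 2 ≤ i := by
        have := hocc.1; omega
      have hm0' : (phi (F (k+3)))[i-2]? = some false := by
        rw [show i - 2 = i - 1 - 1 by omega]; exact hm0
      have hocc2 : OccursAt (F (k+4)) (phi (S k)) (i-1) := by
        rw [hSk1]
        refine occ_cons ?_ hocc hi2'
        rw [hFphi]; exact hm0'
      obtain ⟨j, hjlt, hjeq⟩ := block_start (F (k+3)) (i-2) hm0'
      have hpre : phi (S k) <+: phi ((F (k+3)).drop j) := by
        have h1 := occ_to_prefix hocc2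
        rw [hFphi, show i - 1 - 1 = i - 2 by omega, drop_phi _ j _ hjeq] at h1
        exact h1
      obtain ⟨E, hE⟩ := S_even_ends (k/2) (by omega)
      have hE' : S k = E ++ [false] := by rw [← hE]; congr 1; omega
      have hpre2 : S k <+: (F (k+3)).drop j := by
        rw [hE'] at hpre ⊢
        rw [phi_append, show phi [false] = [false, true] from rfl] at hpre
        exact desub2 E _ hpre
      have hoccj : OccursAt (F (k+3)) (S k) (j+1) :=
        occ_of_prefix_drop hpre2 (by omega)
      have hj1 : j + 1 = fib (k+1) := IH (j+1) hoccj
      have hcnt := count_dropLast_even k hk hpar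
      have hptl := phi_take_len k hk
      rw [show fib (k+1) - 1 = j by omega] at hptl
      have hfib1 : fib (k+1+1) = fib (k+1) + fib k := rfl
      have hp1 := fib_pos k
      have hp2 := fib_pos (k+1)
      omega
    · -- k odd : S (k+1) = phi (S k) ++ [false]
      have hpar : k % 2 = 1 := Nat.odd_iff.mp ho
      have hsc : sc (k+1) = false := sc_of_even _ (by omega)
      have hSk1 : S (k+1) = phi (S k) ++ [false] := phi_S_odd k hk hpar
      have hocc' : OccursAt (F (k+4)) (false :: (F (k+1)).dropLast) i := by
        rw [hSeq, hsc] at hocc; exact hocc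
      have ht : (F (k+4))[i-1]? = some false := occ_head hocc'
      rw [hFphi] at ht
      obtain ⟨j, hjlt, hjeq⟩ := block_start (F (k+3)) (i-1) ht
      have hpre : phi (S k) ++ [false] <+: phi ((F (k+3)).drop j) := by
        have h1 := occ_to_prefix hocc
        rw [hFphi, drop_phi _ j _ hjeq, hSk1] at h1
        exact h1
      have hpre2 : S k <+: (F (k+3)).drop j := desub1 _ _ hpre
      have hoccj : OccursAt (F (k+3)) (S k) (j+1) :=
        occ_of_prefix_drop hpre2 (by omega)
      have hj1 : j + 1 = fib (k+1) := IH (j+1) hoccj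
      have hcnt := count_dropLast_odd k hk hpar
      have hptl := phi_take_len k hk
      rw [show fib (k+1) - 1 = j by omega] at hptl
      have hfib1 : fib (k+1+1) = fib (k+1) + fib k := rfl
      have hp1 := fib_pos k
      have hp2 := fib_pos (k+1)
      have hi1 : 1 ≤ i := hocc.1
      omega

def Covers (T : List Bool) (Γ : Finset ℕ) : Prop :=
  ∀ w : List Bool, w ≠ [] → w <:+: T →
    ∃ i, OccursAt T w i ∧ ∃ k ∈ Γ, i ≤ k ∧ k < i + w.length

def checkB (T : List Bool) (ks : List ℕ) : Bool :=
  (List.range T.length).all fun i0 =>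
    (List.range (T.length + 1)).all fun l =>
      if 1 ≤ l ∧ i0 + l ≤ T.length then
        (List.range T.length).any fun i' =>
          (decide (i' + l ≤ T.length) && ((T.drop i').take l == (T.drop i0).take l))
            && ks.any (fun k => decide (i' + 1 ≤ k) && decide (k < i' + 1 + l))
      else true

lemma covers_of_check (T : List Bool) (ks : List ℕ) (Γ : Finset ℕ)
    (hks : ∀ k ∈ ks, k ∈ Γ) (h : checkB T ks = true) : Covers T Γ := by
  intro w hw hinf
  obtain ⟨s, t, rfl⟩ := hinf
  have hlen : (s ++ w ++ t).length = s.length + w.length + t.length := by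
    simp [List.length_append]; omega
  have hwpos : 1 ≤ w.length := List.length_pos_iff.mpr hw
  rw [checkB, List.all_eq_true] at h
  have h1 := h s.length (List.mem_range.mpr (by omega))
  rw [List.all_eq_true] at h1
  have h2 := h1 w.length (List.mem_range.mpr (by omega))
  rw [if_pos ⟨hwpos, by omega⟩, List.any_eq_true] at h2
  obtain ⟨i', hi'mem, hbody⟩ := h2
  rw [List.mem_range] at hi'mem
  simp only [Bool.and_eq_true, decide_eq_true_eq, beq_iff_eq, List.any_eq_true] at hbody
  obtain ⟨⟨hil, heq⟩, k, hkmem, hk1, hk2⟩ := hbody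
  have hdt : ((s ++ w ++ t).drop s.length).take w.length = w := by
    rw [List.append_assoc, List.drop_left, List.take_left]
  rw [hdt] at heq
  exact ⟨i' + 1, ⟨by omega, by omega, by rw [Nat.add_sub_cancel, heq]⟩,
    k, hks k hkmem, hk1, hk2⟩

lemma F_comm : ∀ n, ((F (n+1)) ++ (F (n+2))).take (fib (n+3) - 2)
    = ((F (n+2)) ++ (F (n+1))).take (fib (n+3) - 2)
  | 0 => by decide
  | n + 1 => by
    have hX : fib (n+4) - 2 = (F (n+2)).length + (fib (n+3) - 2) := by
      rw [F_length]
      have h1 := fib_pos (n+1)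
      have h2 := fib_pos (n+2)
      have e1 : fib (n+3) = fib (n+2) + fib (n+1) := rfl
      have e2 : fib (n+4) = fib (n+3) + fib (n+2) := rfl
      omega
    rw [F_succ (n+1), List.append_assoc, hX, List.take_length_add_append, List.take_length_add_append,
      F_comm n]

lemma F_swap (m : ℕ) : (F (m+5)).take (fib (m+5) - 2)
    = ((F (m+3)) ++ (F (m+4))).take (fib (m+5) - 2) := by
  rw [F_succ (m+3)]
  exact (F_comm (m+2)).symm

lemma covers_base : Covers (F 4) {fib 2, fib 3} := by
  apply covers_of_check (F 4) [2, 3]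
  · intro k hk
    fin_cases hk <;> simp [fib]
  · decide

lemma covers_step (m : ℕ) (IH : Covers (F (m+4)) {fib (m+2), fib (m+3)}) :
    Covers (F (m+5)) {fib (m+3), fib (m+4)} := by
  intro w hw hinf
  have hp1 := fib_pos m
  have hp2 := fib_pos (m+1)
  have hp3 := fib_pos (m+2)
  have e3 : fib (m+3) = fib (m+2) + fib (m+1) := rfl
  have e4 : fib (m+4) = fib (m+3) + fib (m+2) := rfl
  have e5 : fib (m+5) = fib (m+4) + fib (m+3) := rfl
  have hwpos : 1 ≤ w.length := List.length_pos_iff.mpr hw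
  have hpre45 : F (m+4) <+: F (m+5) := F_prefix (m+3)
  obtain ⟨i, hocc⟩ := occ_of_infix hinf
  by_cases hc1 : i ≤ fib (m+4) ∧ fib (m+4) < i + w.length
  · exact ⟨i, hocc, fib (m+4), by simp, hc1.1, hc1.2⟩
  · have hwin : w <:+: F (m+4) := by
      rcases Nat.lt_or_ge (fib (m+4)) (i + w.length) with hbig | hsmall
      · have hi : fib (m+4) < i := by
          by_contra h'
          exact hc1 ⟨by omega, hbig⟩
        have hocc2 : OccursAt ((F (m+4)) ++ (F (m+3))) w i := by
          rw [← F_succ (m+3)]; exact hocc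
        have hocc3 := occ_append_right_inv hocc2 (by rw [F_length]; omega)
        exact (infix_of_occ hocc3).trans (F_prefix (m+2)).isInfix
      · have hocc2 := occ_restrict hpre45 hocc (by rw [F_length]; omega)
        exact infix_of_occ hocc2
    obtain ⟨i', hocc', k', hk', hcross1, hcross2⟩ := IH w hw hwin
    rcases Finset.mem_insert.mp hk' with hk2 | hk3
    · -- k' = fib (m+2)
      subst hk2
      by_cases hc2 : fib (m+3) < i' + w.length
      · exact ⟨i', occ_prefix_ext hpre45 hocc', fib (m+3), by simp, by omega, hc2⟩
      · -- shift by fib (m+3)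
        have hoccS : OccursAt ((F (m+3)) ++ (F (m+4))) w (i' + fib (m+3)) := by
          have := occ_append_right (F (m+3)) hocc'
          rwa [F_length] at this
        have hiend : i' + w.length ≤ fib (m+3) := by omega
        have hocc5 : OccursAt (F (m+5)) w (i' + fib (m+3)) := by
          refine occ_shift (F_swap m) hoccS ?_ ?_
          · omega
          · rw [F_length]; omega
        refine ⟨i' + fib (m+3), hocc5, fib (m+4), by simp, by omega, by omega⟩
    · -- k' = fib (m+3)
      rw [Finset.mem_singleton] at hk3
      subst hk3
      exact ⟨i', occ_prefix_ext hpre45 hocc', fib (m+3), by simp, hcross1, hcross2⟩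

lemma covers_all : ∀ m, Covers (F (m+4)) {fib (m+2), fib (m+3)}
  | 0 => covers_base
  | m + 1 => covers_step m (covers_all m)

lemma attractor_exists (m : ℕ) : IsAttractor (F (m+4)) {fib (m+2), fib (m+3)} := by
  constructor
  · intro k hk
    have h2 := fib_pos (m+2)
    have h3 := fib_pos (m+3)
    have e4 : fib (m+4) = fib (m+3) + fib (m+2) := rfl
    have e3 : fib (m+3) = fib (m+2) + fib (m+1) := rfl
    rw [F_length]
    rcases Finset.mem_insert.mp hk with h | h
    · subst h; constructor <;> omega
    · rw [Finset.mem_singleton] at h; subst h; constructor <;> omega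
  · exact covers_all m

lemma occ_S (k : ℕ) (hk : 2 ≤ k) : OccursAt (F (k+2)) (S k) (fib (k+1)) := by
  have hp0 := fib_pos k
  have hp1 := fib_pos (k+1)
  have e2 : fib (k+2) = fib (k+1) + fib k := rfl
  have hsplit : F (k+1) = (F (k+1)).dropLast ++ [sc (k+2)] := F_split (k+1) (by omega)
  have hDlen : ((F (k+1)).dropLast).length = fib (k+1) - 1 := by
    rw [List.length_dropLast, F_length]
  have hdrop : (F (k+2)).drop (fib (k+1) - 1) = sc (k+2) :: F k := by
    rw [F_succ k]
    conv_lhs => rw [hsplit]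
    rw [List.append_assoc, ← hDlen, List.drop_left]
    rfl
  refine ⟨by omega, ?_, ?_⟩
  · rw [F_length, S_length]; omega
  · rw [hdrop, S_length, show fib k = (fib k - 1) + 1 by omega, List.take_succ_cons,
      S_eq k hk, sc_two]
    congr 1
    rw [List.dropLast_eq_take, F_length]


/-- For every n ≥ 5, every smallest string attractor of F_n consists of
exactly two positions, one in [f_{n-2}, f_{n-1} − 1] and the other in [f_{n-1}, f_n − 1]. -/
theorem fib_smallest_attractor_in_mus_ranges :
    ∀ n : ℕ, 5 ≤ n → ∀ Γ ∈ Att (F n),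
      ∃ u v : ℕ, u ≠ v ∧ Γ = {u, v} ∧
        fib (n - 2) ≤ u ∧ u ≤ fib (n - 1) - 1 ∧
        fib (n - 1) ≤ v ∧ v ≤ fib n - 1 := by
  intro n hn Γ hΓ
  obtain ⟨m, rfl⟩ : ∃ m, n = m + 5 := ⟨n - 5, by omega⟩
  rw [show m + 5 - 2 = m + 3 by omega, show m + 5 - 1 = m + 4 by omega]
  simp only [Att, Set.mem_setOf_eq] at hΓ
  obtain ⟨⟨hbounds, hcov⟩, hmin⟩ := hΓ
  have hp2 := fib_pos (m+2)
  have hp3 := fib_pos (m+3)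
  have hp4 := fib_pos (m+4)
  have e4 : fib (m+4) = fib (m+3) + fib (m+2) := rfl
  have e5 : fib (m+5) = fib (m+4) + fib (m+3) := rfl
  have hatt2 : IsAttractor (F (m+5)) {fib (m+3), fib (m+4)} := attractor_exists (m+1)
  have hcard : Γ.card ≤ 2 := by
    have h := hmin _ hatt2
    exact h.trans (le_trans (Finset.card_insert_le _ _) (by simp))
  have occ1 : OccursAt (F (m+5)) (S (m+2)) (fib (m+3)) := by
    have h := occ_S (m+2) (by omega)
    exact occ_prefix_ext (F_prefix (m+3)) h
  obtain ⟨i₁, hoccu, u, huΓ, hu1, hu2⟩ := hcov (S (m+2)) (S_ne_nil _) (infix_of_occ occ1)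
  have hi₁ : i₁ = fib (m+3) := master (m+2) (by omega) i₁ hoccu
  have occ2 : OccursAt (F (m+5)) (S (m+3)) (fib (m+4)) := occ_S (m+3) (by omega)
  obtain ⟨i₂, hoccv, v, hvΓ, hv1, hv2⟩ := hcov (S (m+3)) (S_ne_nil _) (infix_of_occ occ2)
  have hi₂ : i₂ = fib (m+4) := by
    have hext : OccursAt (F (m+6)) (S (m+3)) i₂ := occ_prefix_ext (F_prefix (m+4)) hoccv
    exact master (m+3) (by omega) i₂ hext
  have hsl2 : (S (m+2)).length = fib (m+2) := S_length _
  have hsl3 : (S (m+3)).length = fib (m+3) := S_length _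
  subst hi₁ hi₂
  rw [hsl2] at hu2
  rw [hsl3] at hv2
  have hne : u ≠ v := by omega
  have hsubset : ({u, v} : Finset ℕ) ⊆ Γ := by
    intro x hx
    rcases Finset.mem_insert.mp hx with h | h
    · subst h; exact huΓ
    · rw [Finset.mem_singleton] at h; subst h; exact hvΓ
  have hcardeq : ({u, v} : Finset ℕ).card = 2 := by
    rw [Finset.card_insert_of_notMem (by simp [hne]), Finset.card_singleton]
  have heq : ({u, v} : Finset ℕ) = Γ :=
    Finset.eq_of_subset_of_card_le hsubset (by omega)
  exact ⟨u, v, hne, heq.symm, hu1, by omega, hv1, by omega⟩
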